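/- Let τ_e, τ_i, σ_e, σ_i, χ, C_m be real constants with χ ≠ 0, and let J_e, J_i, V_e, V_i, I_ion : ℝ × ℝ → ℝ be twice continuously differentiable functions of (x, t) satisfying the Cattaneo flux laws τ_e∂ₜJ_e + J_e = −σ_e∂ₓV_e and τ_i∂ₜJ_i + J_i = −σ_i∂ₓV_i, together with −∂ₓJ_i = I_t = ∂ₓJ_e where I_t = χ(C_m∂ₜV + I_ion) and V = V_i − V_e. Then, with D_e = σ_e/χ and D_i = σ_i/χ, the pair (V, V_e) satisfies the hyperbolic bidomain equations: τ_eC_m∂ₜₜV + C_m∂ₜV + D_e∂ₓₓV_e = −I_ion − τ_e∂ₜI_ion, and τ_iC_m∂ₜₜV + C_m∂ₜV − D_i∂ₓₓV − D_i∂ₓₓV_e = −I_ion − τ_i∂ₜI_ion. -/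

import Mathlib

/-! Differentiating the Cattaneo law `τ∂ₜJ + J = -σ∂ₓU` in space and exchanging
`∂ₓ∂ₜJ = ∂ₜ∂ₓJ` (symmetry of the second Fréchet derivative of a `C²` function) relates
`∂ₓₓU` to `∂ₓJ` and `∂ₜ∂ₓJ`. The current balance `∂ₓJ_e = I_t = -∂ₓJ_i` turns these into `I_t`
and `∂ₜI_t = χ(C_m∂ₜₜV + ∂ₜI_ion)`; dividing by `χ`, and writing `∂ₓₓV_i = ∂ₓₓV + ∂ₓₓV_e` in
the intracellular case, gives the two equations. -/

/-- The partial derivative in the first (space) variable. -/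
noncomputable def pdx (f : ℝ → ℝ → ℝ) (x t : ℝ) : ℝ := deriv (fun y => f y t) x

/-- The partial derivative in the second (time) variable. -/
noncomputable def pdt (f : ℝ → ℝ → ℝ) (x t : ℝ) : ℝ := deriv (fun s => f x s) t

open Function

theorem fderiv_fderiv_apply {𝕜 E F : Type*} [NontriviallyNormedField 𝕜] [NormedAddCommGroup E]
    [NormedSpace 𝕜 E] [NormedAddCommGroup F] [NormedSpace 𝕜 F] {g : E → F} {q : E}
    (hg : DifferentiableAt 𝕜 (fderiv 𝕜 g) q) (v w : E) :
    fderiv 𝕜 (fun p => fderiv 𝕜 g p v) q w = fderiv 𝕜 (fderiv 𝕜 g) q w v := by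
  rw [fderiv_clm_apply hg (differentiableAt_const v)]
  simp

section PartialDerivatives

variable {f g : ℝ → ℝ → ℝ}

theorem pdx_eq_fderiv {x t : ℝ} (hf : DifferentiableAt ℝ (uncurry f) (x, t)) :
    pdx f x t = fderiv ℝ (uncurry f) (x, t) (1, 0) := by
  have hline : HasDerivAt (fun y => ((y, t) : ℝ × ℝ)) (1, 0) x :=
    (hasDerivAt_id x).prodMk (hasDerivAt_const x t)
  exact (hf.hasFDerivAt.comp_hasDerivAt x hline).deriv

theorem pdt_eq_fderiv {x t : ℝ} (hf : DifferentiableAt ℝ (uncurry f) (x, t)) :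
    pdt f x t = fderiv ℝ (uncurry f) (x, t) (0, 1) := by
  have hline : HasDerivAt (fun s => ((x, s) : ℝ × ℝ)) (0, 1) t :=
    (hasDerivAt_const t x).prodMk (hasDerivAt_id t)
  exact (hf.hasFDerivAt.comp_hasDerivAt t hline).deriv

theorem hasDerivAt_pdx (hf : Differentiable ℝ (uncurry f)) (x t : ℝ) :
    HasDerivAt (fun y => f y t) (pdx f x t) x := by
  have hslice : DifferentiableAt ℝ (fun y => f y t) x :=
    (hf (x, t)).comp (f := fun y => (y, t)) x
      (differentiableAt_id.prodMk (differentiableAt_const t))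
  exact hslice.hasDerivAt

theorem hasDerivAt_pdt (hf : Differentiable ℝ (uncurry f)) (x t : ℝ) :
    HasDerivAt (fun s => f x s) (pdt f x t) t := by
  have hslice : DifferentiableAt ℝ (fun s => f x s) t :=
    (hf (x, t)).comp (f := fun s => (x, s)) t
      ((differentiableAt_const x).prodMk differentiableAt_id)
  exact hslice.hasDerivAt

theorem uncurry_pdx (hf : Differentiable ℝ (uncurry f)) :
    uncurry (pdx f) = fun p => fderiv ℝ (uncurry f) p (1, 0) :=
  funext fun p => pdx_eq_fderiv (hf p)

theorem uncurry_pdt (hf : Differentiable ℝ (uncurry f)) :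
    uncurry (pdt f) = fun p => fderiv ℝ (uncurry f) p (0, 1) :=
  funext fun p => pdt_eq_fderiv (hf p)

theorem contDiff_uncurry_pdx {m n : WithTop ℕ∞} (hf : ContDiff ℝ n (uncurry f))
    (hmn : m + 1 ≤ n) :
    ContDiff ℝ m (uncurry (pdx f)) := by
  rw [uncurry_pdx (hf.differentiable (zero_lt_one.trans_le (le_add_self.trans hmn)).ne')]
  exact (hf.fderiv_right hmn).clm_apply contDiff_const

theorem contDiff_uncurry_pdt {m n : WithTop ℕ∞} (hf : ContDiff ℝ n (uncurry f))
    (hmn : m + 1 ≤ n) :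
    ContDiff ℝ m (uncurry (pdt f)) := by
  rw [uncurry_pdt (hf.differentiable (zero_lt_one.trans_le (le_add_self.trans hmn)).ne')]
  exact (hf.fderiv_right hmn).clm_apply contDiff_const

theorem ContDiff.differentiable_uncurry_pdx (hf : ContDiff ℝ 2 (uncurry f)) :
    Differentiable ℝ (uncurry (pdx f)) :=
  (contDiff_uncurry_pdx (m := 1) hf le_rfl).differentiable one_ne_zero

theorem ContDiff.differentiable_uncurry_pdt (hf : ContDiff ℝ 2 (uncurry f)) :
    Differentiable ℝ (uncurry (pdt f)) :=
  (contDiff_uncurry_pdt (m := 1) hf le_rfl).differentiable one_ne_zero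

theorem pdx_pdt_comm (hf : ContDiff ℝ 2 (uncurry f)) : pdx (pdt f) = pdt (pdx f) := by
  funext x t
  have hf' : Differentiable ℝ (uncurry f) := hf.differentiable two_ne_zero
  have hf'' : DifferentiableAt ℝ (fderiv ℝ (uncurry f)) (x, t) :=
    ((hf.fderiv_right (m := 1) le_rfl).differentiable one_ne_zero) (x, t)
  rw [pdx_eq_fderiv (hf.differentiable_uncurry_pdt (x, t)),
    pdt_eq_fderiv (hf.differentiable_uncurry_pdx (x, t)), uncurry_pdt hf', uncurry_pdx hf',
    fderiv_fderiv_apply hf'', fderiv_fderiv_apply hf'']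
  exact (hf.contDiffAt.isSymmSndFDerivAt (by simp)).eq _ _

theorem pdx_sub (hf : Differentiable ℝ (uncurry f)) (hg : Differentiable ℝ (uncurry g)) :
    pdx (fun x t => f x t - g x t) = fun x t => pdx f x t - pdx g x t :=
  funext₂ fun x t => ((hasDerivAt_pdx hf x t).sub (hasDerivAt_pdx hg x t)).deriv

theorem pdt_neg : pdt (fun x t => -f x t) = fun x t => -pdt f x t :=
  funext₂ fun _ _ => deriv.fun_neg

end PartialDerivatives

def CattaneoLaw (τ σ : ℝ) (J U : ℝ → ℝ → ℝ) : Prop :=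
  ∀ x t, τ * pdt J x t + J x t = -σ * pdx U x t

theorem CattaneoLaw.divergence {τ σ : ℝ} {J U : ℝ → ℝ → ℝ} (hcat : CattaneoLaw τ σ J U)
    (hJ : ContDiff ℝ 2 (uncurry J)) (x t : ℝ) :
    τ * pdt (pdx J) x t + pdx J x t = -σ * pdx (pdx U) x t := by
  have hslice : (fun y => τ * pdt J y t + J y t) = fun y => -σ * pdx U y t :=
    funext fun y => hcat y t
  have hderiv := ((hasDerivAt_pdx hJ.differentiable_uncurry_pdt x t).const_mul τ).fun_add
    (hasDerivAt_pdx (hJ.differentiable two_ne_zero) x t)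
  rw [hslice, pdx_pdt_comm hJ] at hderiv
  rw [← hderiv.deriv]
  exact deriv_const_mul_field _

theorem pdt_transmembrane_current {χ Cm : ℝ} {V Iion It : ℝ → ℝ → ℝ}
    (hV : Differentiable ℝ (uncurry (pdt V))) (hIion : Differentiable ℝ (uncurry Iion))
    (hIt : ∀ x t, It x t = χ * (Cm * pdt V x t + Iion x t)) (x t : ℝ) :
    pdt It x t = χ * (Cm * pdt (pdt V) x t + pdt Iion x t) := by
  obtain rfl : It = fun x t => χ * (Cm * pdt V x t + Iion x t) := funext₂ hIt
  have hderiv :=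
    (((hasDerivAt_pdt hV x t).const_mul Cm).add (hasDerivAt_pdt hIion x t)).const_mul χ
  exact hderiv.deriv

/-- In the one-dimensional hyperbolic bidomain model, if the C²
fluxes and potentials satisfy the Cattaneo laws `τ_e∂ₜJ_e + J_e = −σ_e∂ₓV_e`,
`τ_i∂ₜJ_i + J_i = −σ_i∂ₓV_i`, and `−∂ₓJ_i = I_t = ∂ₓJ_e` with
`I_t = χ(C_m∂ₜV + I_ion)` and `V = V_i − V_e`, then with `D_e = σ_e/χ`,
`D_i = σ_i/χ`, the pair `(V, V_e)` satisfies the hyperbolic bidomain equations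
`τ_eC_m∂ₜₜV + C_m∂ₜV + D_e∂ₓₓV_e = −I_ion − τ_e∂ₜI_ion` and
`τ_iC_m∂ₜₜV + C_m∂ₜV − D_i∂ₓₓV − D_i∂ₓₓV_e = −I_ion − τ_i∂ₜI_ion`. -/
theorem hyperbolic_bidomain_from_cattaneo (τe τi σe σi χ Cm : ℝ) (hχ : χ ≠ 0)
    (Je Ji Ve Vi Iion : ℝ → ℝ → ℝ)
    (hJe : ContDiff ℝ 2 (Function.uncurry Je))
    (hJi : ContDiff ℝ 2 (Function.uncurry Ji))
    (hVe : ContDiff ℝ 2 (Function.uncurry Ve))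
    (hVi : ContDiff ℝ 2 (Function.uncurry Vi))
    (hIion : ContDiff ℝ 2 (Function.uncurry Iion))
    (V : ℝ → ℝ → ℝ) (hV : ∀ x t : ℝ, V x t = Vi x t - Ve x t)
    (It : ℝ → ℝ → ℝ)
    (hIt : ∀ x t : ℝ, It x t = χ * (Cm * pdt V x t + Iion x t))
    (hCate : ∀ x t : ℝ, τe * pdt Je x t + Je x t = -σe * pdx Ve x t)
    (hCati : ∀ x t : ℝ, τi * pdt Ji x t + Ji x t = -σi * pdx Vi x t)
    (hKCLi : ∀ x t : ℝ, -pdx Ji x t = It x t)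
    (hKCLe : ∀ x t : ℝ, pdx Je x t = It x t) :
    (∀ x t : ℝ,
      τe * Cm * pdt (pdt V) x t + Cm * pdt V x t + (σe / χ) * pdx (pdx Ve) x t
        = -Iion x t - τe * pdt Iion x t) ∧
    (∀ x t : ℝ,
      τi * Cm * pdt (pdt V) x t + Cm * pdt V x t - (σi / χ) * pdx (pdx V) x t
          - (σi / χ) * pdx (pdx Ve) x t
        = -Iion x t - τi * pdt Iion x t) := by
  obtain rfl : V = fun x t => Vi x t - Ve x t := funext₂ hV
  have hVxx : pdx (pdx fun x t => Vi x t - Ve x t)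
      = fun x t => pdx (pdx Vi) x t - pdx (pdx Ve) x t := by
    rw [pdx_sub (hVi.differentiable two_ne_zero) (hVe.differentiable two_ne_zero),
      pdx_sub hVi.differentiable_uncurry_pdx hVe.differentiable_uncurry_pdx]
  have hV2 : ContDiff ℝ 2 (uncurry fun x t => Vi x t - Ve x t) := hVi.sub hVe
  have hItt := pdt_transmembrane_current hV2.differentiable_uncurry_pdt
    (hIion.differentiable two_ne_zero) hIt
  have hJex : pdx Je = It := funext₂ hKCLe
  have hJix : pdx Ji = fun x t => -It x t := funext₂ fun x t => by rw [← hKCLi, neg_neg]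
  refine ⟨fun x t => ?_, fun x t => ?_⟩
  · have h := CattaneoLaw.divergence hCate hJe x t
    rw [hJex, hItt, hIt] at h
    field_simp
    linear_combination h
  · have h := CattaneoLaw.divergence hCati hJi x t
    simp only [hJix, pdt_neg] at h
    rw [hItt, hIt] at h
    rw [hVxx]
    field_simp
    linear_combination -h
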